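/- Let a(τ), b(τ) be differentiable with b(τ) > 0, a'(τ) = A(τ), b'(τ) = B(τ) > 0. Then the lognormal density f̃(w,τ) = (w√(2πb(τ)))^{-1} exp(-(log w + b(τ)/2 - a(τ))²/(2b(τ))) is a classical solution of the Fokker-Planck equation ∂_τ f̃ = ∂_w[-A(τ)w f̃ + (B(τ)/2) ∂_w(w² f̃)] on (0,∞) × (0,∞). -/

import Mathlib

/-!
In the variable `x = log w`, the function `w f̃(w, τ)` is the Gaussian density `G` of mean
`a - b / 2` and variance `b`, and the Fokker–Planck equation becomes the drift–diffusion
equation `∂_τ G = -(A - B / 2) ∂_x G + (B / 2) ∂_x² G`. A Gaussian solves it because moving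
the mean shifts it (`∂_m G = -∂_x G`) and increasing the variance diffuses it
(`∂_v G = ∂_x² G / 2`).
-/

open Real Filter

/-- Unlike `ProbabilityTheory.gaussianPDFReal`, the variance is real, so that it can move along
a real-valued path. -/
noncomputable def gaussDensity (m v x : ℝ) : ℝ :=
  (√(2 * π * v))⁻¹ * exp (-(x - m) ^ 2 / (2 * v))

theorem hasDerivAt_gaussDensity (m v x : ℝ) :
    HasDerivAt (gaussDensity m v) (-((x - m) / v) * gaussDensity m v x) x := by
  refine ((((hasDerivAt_id x).sub_const m).pow 2).neg.div_const (2 * v)).exp.const_mul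
    (√(2 * π * v))⁻¹ |>.congr_deriv ?_
  simp only [gaussDensity, id, Pi.neg_apply, Pi.pow_apply]
  ring

theorem hasDerivAt_affine_mul_gaussDensity (p q m v x : ℝ) :
    HasDerivAt (fun x => (p + q * ((x - m) / v)) * gaussDensity m v x)
      ((q / v - (p + q * ((x - m) / v)) * ((x - m) / v)) * gaussDensity m v x) x := by
  refine (((((hasDerivAt_id x).sub_const m).div_const v).const_mul q).const_add p
    |>.mul (hasDerivAt_gaussDensity m v x)).congr_deriv ?_
  simp only [id]
  ring

theorem hasDerivAt_gaussDensity_comp {m v : ℝ → ℝ} {m' v' t : ℝ} (x : ℝ)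
    (hm : HasDerivAt m m' t) (hv : HasDerivAt v v' t) (hvt : 0 < v t) :
    HasDerivAt (fun t => gaussDensity (m t) (v t) x)
      (((x - m t) / v t * m' + ((x - m t) ^ 2 / v t ^ 2 - 1 / v t) / 2 * v') *
        gaussDensity (m t) (v t) x) t := by
  have hs : 0 < 2 * π * v t := by positivity
  have hsqrt := ((hv.const_mul (2 * π)).sqrt hs.ne').inv (Real.sqrt_pos.2 hs).ne'
  have hexp := ((((hasDerivAt_const t x).sub hm).pow 2).neg.div (hv.const_mul 2)
    (by positivity)).exp
  refine (hsqrt.mul hexp).congr_deriv ?_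
  simp only [gaussDensity, Pi.neg_apply, Pi.pow_apply, Pi.sub_apply, Pi.div_apply, Pi.inv_apply]
  have hsq := Real.sq_sqrt hs.le
  have hne := (Real.sqrt_pos.2 hs).ne'
  field_simp
  rw [hsq]
  ring

theorem lognormal_eq_gaussDensity_log (a b w : ℝ) :
    (w * √(2 * π * b))⁻¹ * exp (-(log w + b / 2 - a) ^ 2 / (2 * b)) =
      gaussDensity (a - b / 2) b (log w) / w := by
  rw [gaussDensity, mul_inv]
  ring_nf

theorem hasDerivAt_sq_mul_div_comp_log {g : ℝ → ℝ} {g' w : ℝ} (hw : 0 < w)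
    (hg : HasDerivAt g g' (log w)) :
    HasDerivAt (fun u => u ^ 2 * (g (log u) / u)) (g (log w) + g') w := by
  have hmul := (hasDerivAt_id w).mul (hg.comp w (hasDerivAt_log hw.ne'))
  refine (hmul.congr_of_eventuallyEq ?_).congr_deriv ?_
  · filter_upwards [Ioi_mem_nhds hw] with u (hu : 0 < u)
    simp only [Pi.mul_apply, id, Function.comp_apply]
    field_simp
  · simp only [id, Function.comp_apply]
    field_simp

theorem stmt_17_general (A B a b : ℝ → ℝ)
    (hab : ∀ τ, HasDerivAt a (A τ) τ ∧ HasDerivAt b (B τ) τ)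
    (hbpos : ∀ τ, 0 < b τ)
    (f : ℝ → ℝ → ℝ)
    (hfdef : ∀ w τ, f w τ =
      (w * Real.sqrt (2 * π * b τ))⁻¹ *
        Real.exp (-(Real.log w + b τ / 2 - a τ) ^ 2 / (2 * b τ))) :
    ∀ w : ℝ, 0 < w → ∀ τ : ℝ, 0 < τ →
      HasDerivAt (fun t => f w t)
        (deriv (fun v => -(A τ) * v * f v τ
          + (B τ / 2) * deriv (fun u => u ^ 2 * f u τ) v) w) τ := by
  intro w hw τ _
  obtain ⟨ha, hb⟩ := hab τ
  simp only [hfdef, lognormal_eq_gaussDensity_log]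
  set m := a τ - b τ / 2
  have hflux : (fun v => -(A τ) * v * (gaussDensity m (b τ) (log v) / v) +
      B τ / 2 * deriv (fun u => u ^ 2 * (gaussDensity m (b τ) (log u) / u)) v) =ᶠ[nhds w]
      fun v => (B τ / 2 - A τ + -(B τ / 2) * ((log v - m) / b τ)) *
        gaussDensity m (b τ) (log v) := by
    filter_upwards [Ioi_mem_nhds hw] with v (hv : 0 < v)
    rw [(hasDerivAt_sq_mul_div_comp_log hv (hasDerivAt_gaussDensity _ _ _)).deriv]
    field_simp
    ring
  have hφ : HasDerivAt (fun v => (B τ / 2 - A τ + -(B τ / 2) * ((log v - m) / b τ)) *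
      gaussDensity m (b τ) (log v)) _ w :=
    (hasDerivAt_affine_mul_gaussDensity _ _ m (b τ) (log w)).comp w (hasDerivAt_log hw.ne')
  rw [hflux.deriv_eq, hφ.deriv]
  have hm : HasDerivAt (fun t => a t - b t / 2) (A τ - B τ / 2) τ := ha.sub (hb.div_const 2)
  refine ((hasDerivAt_gaussDensity_comp (log w) hm hb (hbpos τ)).div_const w).congr_deriv ?_
  have := (hbpos τ).ne'
  simp only [m]
  field_simp
  ring

theorem stmt_17 (A B a b : ℝ → ℝ)
    (hab : ∀ τ, HasDerivAt a (A τ) τ ∧ HasDerivAt b (B τ) τ)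
    (hbpos : ∀ τ, 0 < b τ) (hBpos : ∀ τ, 0 < B τ)
    (f : ℝ → ℝ → ℝ)
    (hfdef : ∀ w τ, f w τ =
      (w * Real.sqrt (2 * π * b τ))⁻¹ *
        Real.exp (-(Real.log w + b τ / 2 - a τ) ^ 2 / (2 * b τ))) :
    ∀ w : ℝ, 0 < w → ∀ τ : ℝ, 0 < τ →
      HasDerivAt (fun t => f w t)
        (deriv (fun v => -(A τ) * v * f v τ
          + (B τ / 2) * deriv (fun u => u ^ 2 * f u τ) v) w) τ :=
  stmt_17_general A B a b hab hbpos f hfdef
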